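/- arXiv:1503.05431 — 2 statements merged into one kernel-verified Lean document; each statement's English description precedes it below -/
import Mathlib

section
/- Let v* = ‖v*‖ p₁ ⊗ ⋯ ⊗ p_d be a best rank-one approximation of b with all ‖p_μ‖ = 1, and let μ ≠ ν. Let M be the matrix in L(ℝ^{n_ν}, ℝ^{n_μ}) defined by ⟨M g_ν, g_μ⟩ = ⟨p₁⊗⋯⊗g_ν⊗⋯⊗g_μ⊗⋯⊗p_d, b⟩ (contracting b against the fixed p_ξ for ξ ∉ {μ,ν}). Then ‖v*‖ is the largest singular value of M, with p_ν, p_μ as associated singular vectors. -/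
open scoped BigOperators

/-- Rank-one tensor in `⊗_{μ} ℝ^{n μ}`, modeled as `EuclideanSpace ℝ (Π μ, Fin (n μ))`. -/
noncomputable def rankOne {d : ℕ} (n : Fin d → ℕ)
    (p : ∀ μ, EuclideanSpace ℝ (Fin (n μ))) :
    EuclideanSpace ℝ (∀ μ, Fin (n μ)) :=
  WithLp.toLp 2 (fun i : (∀ μ, Fin (n μ)) => ∏ μ, p μ (i μ))

/-- The objective function `f(v) = (1/‖b‖²)(½⟨v,v⟩ − ⟨b,v⟩)`. -/
noncomputable def fobj {ι : Type*} [Fintype ι] (b v : EuclideanSpace ℝ ι) : ℝ :=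
  (1 / ‖b‖ ^ 2) * ((1 / 2) * (inner ℝ v v : ℝ) - (inner ℝ b v : ℝ))


/-- The rank-one tensor `V̄(g_ν, g_μ)` obtained from fixed vectors `p` by replacing the
`ν`-th and `μ`-th components by `g_ν` and `g_μ`. -/
noncomputable def Vbar {d : ℕ} (n : Fin d → ℕ)
    (p : ∀ ξ, EuclideanSpace ℝ (Fin (n ξ))) (ν μ : Fin d)
    (gν : EuclideanSpace ℝ (Fin (n ν))) (gμ : EuclideanSpace ℝ (Fin (n μ))) :
    EuclideanSpace ℝ (∀ ξ, Fin (n ξ)) :=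
  rankOne n (Function.update (Function.update p ν gν) μ gμ)

/-!
Write `u = p₁ ⊗ ⋯ ⊗ p_d`, a unit vector, so `v* = ‖v*‖ u`. Moving `v*` along a line
`t ↦ v* + t (p₁ ⊗ ⋯ ⊗ g ⊗ ⋯ ⊗ p_d)` stays in the rank-one cone, since the tensor product is
linear in each slot; minimality therefore makes `b - v*` orthogonal to all these tensors, which
gives `⟨b, p₁ ⊗ ⋯ ⊗ g ⊗ ⋯ ⊗ p_d⟩ = ‖v*‖ ⟨p_τ, g⟩`, i.e. `M p_ν = ‖v*‖ p_μ` and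
`Mᵀ p_μ = ‖v*‖ p_ν`. For a unit rank-one tensor `w`, the best multiple of `w` is `⟨b, w⟩ w`, at
squared distance `‖b‖² - ⟨b, w⟩²`; comparing with `v*` yields `⟨b, w⟩ ≤ ‖v*‖`. A singular
triple `(σ, q_ν, q_μ)` of `M` has `σ = ⟨b, p₁ ⊗ ⋯ ⊗ q_ν ⊗ ⋯ ⊗ q_μ ⊗ ⋯ ⊗ p_d⟩`, hence `σ ≤ ‖v*‖`.
-/

open Function

section InnerProductSpace

variable {E : Type*} [NormedAddCommGroup E] [InnerProductSpace ℝ E]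

theorem real_inner_eq_zero_of_forall_norm_le_norm_sub_smul {x w : E}
    (h : ∀ t : ℝ, ‖x‖ ≤ ‖x - t • w‖) : inner ℝ x w = 0 := by
  set a := inner ℝ x w
  by_contra ha
  have hw : ‖w‖ ≠ 0 := fun hw => ha (inner_eq_zero_of_right x hw)
  have hsq := pow_le_pow_left₀ (norm_nonneg _) (h (a / ‖w‖ ^ 2)) 2
  rw [norm_sub_sq_real, real_inner_smul_right, norm_smul, mul_pow, Real.norm_eq_abs, sq_abs]
    at hsq
  have hpos : 0 < a ^ 2 / ‖w‖ ^ 2 := by positivity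
  have : a / ‖w‖ ^ 2 * a = a ^ 2 / ‖w‖ ^ 2 := by ring
  have : (a / ‖w‖ ^ 2) ^ 2 * ‖w‖ ^ 2 = a ^ 2 / ‖w‖ ^ 2 := by field_simp
  linarith

theorem real_inner_eq_of_forall_norm_sub_smul_le {b u : E} {a : ℝ} (hu : ‖u‖ = 1)
    (h : ∀ c : ℝ, ‖b - a • u‖ ≤ ‖b - c • u‖) : inner ℝ b u = a := by
  have horth := real_inner_eq_zero_of_forall_norm_le_norm_sub_smul (x := b - a • u) (w := u)
    fun t => by simpa only [sub_sub, ← add_smul] using h (a + t)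
  rw [inner_sub_left, real_inner_smul_left, real_inner_self_eq_norm_sq, hu] at horth
  linarith

theorem norm_sub_real_inner_smul_sq {u : E} (hu : ‖u‖ = 1) (b : E) :
    ‖b - inner ℝ b u • u‖ ^ 2 = ‖b‖ ^ 2 - inner ℝ b u ^ 2 := by
  rw [norm_sub_sq_real, real_inner_smul_right, norm_smul, hu, Real.norm_eq_abs, mul_one,
    sq_abs]
  ring

theorem sq_real_inner_le_of_norm_sub_real_inner_smul_le {b u w : E} (hu : ‖u‖ = 1)
    (hw : ‖w‖ = 1) (h : ‖b - inner ℝ b u • u‖ ≤ ‖b - inner ℝ b w • w‖) :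
    inner ℝ b w ^ 2 ≤ inner ℝ b u ^ 2 := by
  have hsq := pow_le_pow_left₀ (norm_nonneg _) h 2
  rw [norm_sub_real_inner_smul_sq hu, norm_sub_real_inner_smul_sq hw] at hsq
  linarith

end InnerProductSpace

section RankOne

variable {d : ℕ} {n : Fin d → ℕ}

theorem inner_rankOne (q r : ∀ μ, EuclideanSpace ℝ (Fin (n μ))) :
    inner ℝ (rankOne n q) (rankOne n r) = ∏ μ, inner ℝ (q μ) (r μ) := by
  simp only [rankOne, PiLp.inner_apply, RCLike.inner_apply, conj_trivial]
  rw [Finset.prod_univ_sum]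
  exact Finset.sum_congr rfl fun i _ => Finset.prod_mul_distrib.symm

theorem norm_rankOne (q : ∀ μ, EuclideanSpace ℝ (Fin (n μ))) :
    ‖rankOne n q‖ = ∏ μ, ‖q μ‖ := by
  refine (pow_left_inj₀ (norm_nonneg _) (by positivity) two_ne_zero).mp ?_
  simp only [← real_inner_self_eq_norm_sq, inner_rankOne, ← Finset.prod_pow]

theorem norm_update_eq_one {p : ∀ ξ, EuclideanSpace ℝ (Fin (n ξ))} (hp : ∀ ξ, ‖p ξ‖ = 1)
    {τ : Fin d} {g : EuclideanSpace ℝ (Fin (n τ))} (hg : ‖g‖ = 1) (ξ : Fin d) :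
    ‖update p τ g ξ‖ = 1 := by
  rcases eq_or_ne ξ τ with rfl | hξ
  · rwa [update_self]
  · rw [update_of_ne hξ, hp]

theorem rankOne_update_apply (p : ∀ ξ, EuclideanSpace ℝ (Fin (n ξ))) (τ : Fin d)
    (g : EuclideanSpace ℝ (Fin (n τ))) (i : ∀ ξ, Fin (n ξ)) :
    rankOne n (update p τ g) i = g (i τ) * ∏ ξ ∈ {τ}ᶜ, p ξ (i ξ) := by
  change ∏ ξ, update p τ g ξ (i ξ) = _
  rw [Fintype.prod_eq_mul_prod_compl τ, update_self]
  exact congrArg _ <| Finset.prod_congr rfl fun ξ hξ => by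
    rw [update_of_ne (by simpa using hξ)]

theorem rankOne_update_smul_add_smul (p : ∀ ξ, EuclideanSpace ℝ (Fin (n ξ))) (τ : Fin d)
    (x y : EuclideanSpace ℝ (Fin (n τ))) (a t : ℝ) :
    rankOne n (update p τ (a • x + t • y))
      = a • rankOne n (update p τ x) + t • rankOne n (update p τ y) := by
  ext i
  simp only [PiLp.add_apply, PiLp.smul_apply, smul_eq_mul, rankOne_update_apply]
  ring

theorem inner_rankOne_rankOne_update {p : ∀ ξ, EuclideanSpace ℝ (Fin (n ξ))}
    (hp : ∀ ξ, ‖p ξ‖ = 1) (τ : Fin d) (g : EuclideanSpace ℝ (Fin (n τ))) :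
    inner ℝ (rankOne n p) (rankOne n (update p τ g)) = inner ℝ (p τ) g := by
  rw [inner_rankOne, Fintype.prod_eq_mul_prod_compl τ, update_self,
    Finset.prod_eq_one fun ξ hξ => by
      rw [update_of_ne (by simpa using hξ), real_inner_self_eq_norm_sq, hp ξ, one_pow],
    mul_one]

theorem Vbar_self_left (p : ∀ ξ, EuclideanSpace ℝ (Fin (n ξ))) (ν μ : Fin d)
    (g : EuclideanSpace ℝ (Fin (n μ))) :
    Vbar n p ν μ (p ν) g = rankOne n (update p μ g) := by
  rw [Vbar, update_eq_self]

theorem Vbar_self_right (p : ∀ ξ, EuclideanSpace ℝ (Fin (n ξ))) {ν μ : Fin d} (h : ν ≠ μ)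
    (g : EuclideanSpace ℝ (Fin (n ν))) :
    Vbar n p ν μ g (p μ) = rankOne n (update p ν g) := by
  rw [Vbar, ← update_of_ne h.symm g p, update_eq_self]

end RankOne

section BestRankOne

variable {d : ℕ} {n : Fin d → ℕ} {b v : EuclideanSpace ℝ (∀ ξ, Fin (n ξ))}
  {p : ∀ ξ, EuclideanSpace ℝ (Fin (n ξ))}

theorem inner_rankOne_update_of_isBest (hp : ∀ ξ, ‖p ξ‖ = 1) (hv : v = ‖v‖ • rankOne n p)
    (hbest : ∀ (c : ℝ) (q : ∀ ξ, EuclideanSpace ℝ (Fin (n ξ))),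
      ‖b - v‖ ≤ ‖b - c • rankOne n q‖)
    (τ : Fin d) (g : EuclideanSpace ℝ (Fin (n τ))) :
    inner ℝ b (rankOne n (update p τ g)) = ‖v‖ * inner ℝ (p τ) g := by
  have horth := real_inner_eq_zero_of_forall_norm_le_norm_sub_smul
    (x := b - v) (w := rankOne n (update p τ g)) fun t => by
      have h := hbest 1 (update p τ (‖v‖ • p τ + t • g))
      rwa [one_smul, rankOne_update_smul_add_smul, update_eq_self, ← hv, ← sub_sub] at h
  rw [inner_sub_left, sub_eq_zero] at horth
  rw [horth, hv, real_inner_smul_left, inner_rankOne_rankOne_update hp, norm_smul,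
    norm_rankOne, Finset.prod_eq_one fun ξ _ => hp ξ, mul_one, norm_norm]

theorem inner_rankOne_of_isBest (hp : ∀ ξ, ‖p ξ‖ = 1) (hv : v = ‖v‖ • rankOne n p)
    (hbest : ∀ (c : ℝ) (q : ∀ ξ, EuclideanSpace ℝ (Fin (n ξ))),
      ‖b - v‖ ≤ ‖b - c • rankOne n q‖) :
    inner ℝ b (rankOne n p) = ‖v‖ := by
  refine real_inner_eq_of_forall_norm_sub_smul_le ?_ fun c => hv ▸ hbest c p
  rw [norm_rankOne, Finset.prod_eq_one fun ξ _ => hp ξ]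

theorem inner_rankOne_le_of_isBest (hp : ∀ ξ, ‖p ξ‖ = 1) (hv : v = ‖v‖ • rankOne n p)
    (hbest : ∀ (c : ℝ) (q : ∀ ξ, EuclideanSpace ℝ (Fin (n ξ))),
      ‖b - v‖ ≤ ‖b - c • rankOne n q‖)
    {q : ∀ ξ, EuclideanSpace ℝ (Fin (n ξ))} (hq : ∀ ξ, ‖q ξ‖ = 1) :
    inner ℝ b (rankOne n q) ≤ ‖v‖ := by
  have hbu := inner_rankOne_of_isBest hp hv hbest
  have h : ‖b - inner ℝ b (rankOne n p) • rankOne n p‖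
      ≤ ‖b - inner ℝ b (rankOne n q) • rankOne n q‖ := by
    rw [hbu, ← hv]
    exact hbest _ q
  refine le_of_sq_le_sq ?_ (norm_nonneg v)
  rw [← hbu]
  refine sq_real_inner_le_of_norm_sub_real_inner_smul_le ?_ ?_ h <;>
    simp only [norm_rankOne, hp, hq, Finset.prod_const_one]

end BestRankOne

/-- If `v* = ‖v*‖ p₁ ⊗ ⋯ ⊗ p_d` is a best rank-one approximation of `b`, then `‖v*‖` is
the largest singular value of the contracted matrix `M`, with `p_ν, p_μ` as associated
singular vectors. -/
theorem stmt5 {d : ℕ} (n : Fin d → ℕ)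
    (b : EuclideanSpace ℝ (∀ ξ, Fin (n ξ)))
    (p : ∀ ξ, EuclideanSpace ℝ (Fin (n ξ))) (hp : ∀ ξ, ‖p ξ‖ = 1)
    (ν μ : Fin d) (hνμ : ν ≠ μ)
    (v : EuclideanSpace ℝ (∀ ξ, Fin (n ξ)))
    (hv : v = ‖v‖ • rankOne n p)
    (hbest : ∀ (c : ℝ) (q : ∀ ξ, EuclideanSpace ℝ (Fin (n ξ))),
      ‖b - v‖ ≤ ‖b - c • rankOne n q‖)
    (M : EuclideanSpace ℝ (Fin (n ν)) →ₗ[ℝ] EuclideanSpace ℝ (Fin (n μ)))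
    (hM : ∀ (gν : EuclideanSpace ℝ (Fin (n ν))) (gμ : EuclideanSpace ℝ (Fin (n μ))),
      (inner ℝ (M gν) gμ : ℝ) = (inner ℝ (Vbar n p ν μ gν gμ) b : ℝ)) :
    M (p ν) = ‖v‖ • p μ ∧
      (LinearMap.adjoint M) (p μ) = ‖v‖ • p ν ∧
      ∀ (σ : ℝ) (qν : EuclideanSpace ℝ (Fin (n ν))) (qμ : EuclideanSpace ℝ (Fin (n μ))),
        ‖qν‖ = 1 → ‖qμ‖ = 1 → M qν = σ • qμ → (LinearMap.adjoint M) qμ = σ • qν →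
        σ ≤ ‖v‖ := by
  have hslot := inner_rankOne_update_of_isBest hp hv hbest
  refine ⟨ext_inner_right ℝ fun g => ?_, ext_inner_right ℝ fun g => ?_,
    fun σ qν qμ hqν hqμ hMq _ => ?_⟩
  · rw [hM, Vbar_self_left, real_inner_comm, hslot, real_inner_smul_left]
  · rw [LinearMap.adjoint_inner_left, real_inner_comm, hM, Vbar_self_right p hνμ,
      real_inner_comm, hslot, real_inner_smul_left]
  · have hσ := hM qν qμ
    rw [hMq, real_inner_smul_left, real_inner_self_eq_norm_sq, hqμ, one_pow, mul_one,
      real_inner_comm, Vbar] at hσ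
    exact hσ ▸ inner_rankOne_le_of_isBest hp hv hbest
      (norm_update_eq_one (norm_update_eq_one hp hqν) hqμ)
end

section
/- For the orthogonally decomposable tensor b = Σ_{j=1}^2 λ_j ⊗_{μ=1}^d b_{jμ} with λ₁ > λ₂ > 0, d ≥ 3, and initial guesses parametrized modewise by p_μ(φ_μ) = sin(φ_μ) b_{2μ} + cos(φ_μ) b_{1μ}, φ_μ ∈ [0, π/2], the dominance condition of the global-minimum term b₁ at the initial guess holds for all μ if and only if tan(φ_μ) < (λ₁/λ₂)^{1/(d−2)} for all μ. The threshold angle φ*_{d} = arctan((λ₁/λ₂)^{1/(d−2)}) satisfies φ*_d > π/4 and φ*_d → π/4 as d → ∞. -/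
open Filter Topology Real

/-!
At `p_μ = sin φ_μ b_{2μ} + cos φ_μ b_{1μ}` the overlaps are `⟨b_{1μ}, p_μ⟩ = cos φ_μ` and
`⟨b_{2μ}, p_μ⟩ = sin φ_μ`. Since `λ₁^{2/k} = λ₂^{2/k} r²` with `r = (λ₁/λ₂)^{1/k}`, dominance
reads `sin² φ_μ < r² cos² φ_μ`, i.e. `tan φ_μ < r` on `[0, π/2)`. As `λ₁ > λ₂` we have
`r > 1 = tan (π/4)`, and `r → 1` as the order `k + 2` grows, so `arctan r → π/4`.
-/

section Orthonormal

variable {E : Type*} [NormedAddCommGroup E] [InnerProductSpace ℝ E] {e₁ e₂ : E}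

lemma real_inner_smul_add_smul_self_of_orthogonal (h₁ : ‖e₁‖ = 1) (h₁₂ : inner ℝ e₁ e₂ = (0 : ℝ)) (s c : ℝ) :
    inner ℝ e₁ (s • e₂ + c • e₁) = c := by
  rw [inner_add_right, real_inner_smul_right, real_inner_smul_right, h₁₂,
    real_inner_self_eq_norm_sq, h₁]
  ring

lemma real_inner_self_smul_add_smul_of_orthogonal (h₂ : ‖e₂‖ = 1) (h₁₂ : inner ℝ e₁ e₂ = (0 : ℝ)) (s c : ℝ) :
    inner ℝ e₂ (s • e₂ + c • e₁) = s := by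
  rw [inner_add_right, real_inner_smul_right, real_inner_smul_right, real_inner_comm e₁ e₂, h₁₂,
    real_inner_self_eq_norm_sq, h₂]
  ring

end Orthonormal

lemma rpow_two_div_eq_mul_sq_rpow_one_div {a b : ℝ} (ha : 0 ≤ a) (hb : 0 < b) (k : ℝ) :
    a ^ (2 / k) = b ^ (2 / k) * ((a / b) ^ (1 / k)) ^ 2 := by
  rw [← Real.rpow_natCast _ 2, ← Real.rpow_mul (div_nonneg ha hb.le),
    Real.div_rpow ha hb.le, Nat.cast_ofNat, one_div_mul_eq_div,
    mul_div_cancel₀ _ (Real.rpow_pos_of_pos hb _).ne']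

lemma mul_sin_sq_lt_mul_sq_mul_cos_sq_iff {w r φ : ℝ} (hw : 0 < w) (hr : 0 < r)
    (hφ : φ ∈ Set.Ico 0 (π / 2)) :
    w * sin φ ^ 2 < w * r ^ 2 * cos φ ^ 2 ↔ tan φ < r := by
  have hsin : 0 ≤ sin φ :=
    sin_nonneg_of_nonneg_of_le_pi hφ.1 (hφ.2.le.trans (by linarith [pi_pos]))
  have hcos : 0 < cos φ := cos_pos_of_mem_Ioo ⟨by linarith [hφ.1, pi_pos], hφ.2⟩
  rw [tan_eq_sin_div_cos, div_lt_iff₀ hcos, mul_assoc, mul_lt_mul_iff_right₀ hw, ← mul_pow]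
  exact pow_lt_pow_iff_left₀ hsin (mul_pos hr hcos).le two_ne_zero

lemma pi_div_four_lt_arctan {x : ℝ} (hx : 1 < x) : π / 4 < arctan x :=
  arctan_one ▸ arctan_strictMono hx

lemma tendsto_arctan_rpow_inv_atTop {L : ℝ} (hL : 0 < L) {f : ℕ → ℝ}
    (hf : Tendsto f atTop atTop) :
    Tendsto (fun m => arctan (L ^ (1 / f m))) atTop (𝓝 (π / 4)) := by
  have hexp : Tendsto (fun m => 1 / f m) atTop (𝓝 0) := by
    simpa only [one_div, Function.comp_def] using tendsto_inv_atTop_zero.comp hf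
  have hpow : Tendsto (fun m => L ^ (1 / f m)) atTop (𝓝 1) := by
    simpa only [Real.rpow_zero, Function.comp_def] using
      (Real.continuousAt_const_rpow (b := 0) hL.ne').tendsto.comp hexp
  simpa only [arctan_one, Function.comp_def] using (continuous_arctan.tendsto 1).comp hpow

/-- For `b = λ₁ ⊗_μ b_{1μ} + λ₂ ⊗_μ b_{2μ}` of order `d+3` with orthonormal `{b_{1μ}, b_{2μ}}`
and `λ₁ > λ₂ > 0`, and initial guesses `p_μ(φ_μ) = sin(φ_μ) b_{2μ} + cos(φ_μ) b_{1μ}`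
with `φ_μ ∈ [0, π/2)`: the dominance of the global-minimum term `b₁` holds for all `μ`
iff `tan(φ_μ) < (λ₁/λ₂)^{1/(d+1)}` for all `μ`; the threshold angle
`φ* = arctan((λ₁/λ₂)^{1/(d+1)})` satisfies `φ* > π/4`, and `φ* → π/4` as the order tends
to infinity. -/
theorem stmt17 {d : ℕ} (n : Fin (d + 3) → ℕ)
    (lam₁ lam₂ : ℝ) (hlam₂ : 0 < lam₂) (hlam : lam₂ < lam₁)
    (b₁ b₂ : ∀ μ, EuclideanSpace ℝ (Fin (n μ)))
    (hb₁ : ∀ μ, ‖b₁ μ‖ = 1) (hb₂ : ∀ μ, ‖b₂ μ‖ = 1)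
    (horth : ∀ μ, (inner ℝ (b₁ μ) (b₂ μ) : ℝ) = 0)
    (φ : Fin (d + 3) → ℝ) (hφ : ∀ μ, φ μ ∈ Set.Ico 0 (π / 2))
    (p : ∀ μ, EuclideanSpace ℝ (Fin (n μ)))
    (hp : ∀ μ, p μ = Real.sin (φ μ) • b₂ μ + Real.cos (φ μ) • b₁ μ) :
    ((∀ μ, lam₂ ^ ((2 : ℝ) / ((d : ℝ) + 1)) * (inner ℝ (b₂ μ) (p μ) : ℝ) ^ 2
          < lam₁ ^ ((2 : ℝ) / ((d : ℝ) + 1)) * (inner ℝ (b₁ μ) (p μ) : ℝ) ^ 2) ↔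
        (∀ μ, Real.tan (φ μ) < (lam₁ / lam₂) ^ ((1 : ℝ) / ((d : ℝ) + 1)))) ∧
      π / 4 < Real.arctan ((lam₁ / lam₂) ^ ((1 : ℝ) / ((d : ℝ) + 1))) ∧
      Tendsto (fun m : ℕ => Real.arctan ((lam₁ / lam₂) ^ ((1 : ℝ) / ((m : ℝ) - 2))))
        atTop (𝓝 (π / 4)) := by
  have hratio : 1 < lam₁ / lam₂ := (one_lt_div hlam₂).mpr hlam
  have hr : 1 < (lam₁ / lam₂) ^ ((1 : ℝ) / ((d : ℝ) + 1)) :=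
    Real.one_lt_rpow hratio (by positivity)
  refine ⟨forall_congr' fun μ => ?_, pi_div_four_lt_arctan hr,
    tendsto_arctan_rpow_inv_atTop (by linarith)
      (tendsto_atTop_add_const_right _ (-2) tendsto_natCast_atTop_atTop)⟩
  rw [hp, real_inner_smul_add_smul_self_of_orthogonal (hb₁ μ) (horth μ),
    real_inner_self_smul_add_smul_of_orthogonal (hb₂ μ) (horth μ),
    rpow_two_div_eq_mul_sq_rpow_one_div (hlam₂.trans hlam).le hlam₂]
  exact mul_sin_sq_lt_mul_sq_mul_cos_sq_iff (Real.rpow_pos_of_pos hlam₂ _) (by linarith) (hφ μ)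
end
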